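/- For every r > 0, 2^{2r−8}·(2⁸·a₀⁻ + 2⁶·a₁⁻ + 2⁴·2·a₂⁻ + 2²·5·a₃⁻ + 14·a₄⁻) − 1 = (3^{r−1} − 1)/2. -/
import Mathlib


noncomputable section

open Real Filter

def P1m (r κ η : ℝ) : ℝ := ((4 - r) * κ + (r - 2) * η) * κ ^ (r - 1) * η ^ 2

def P2m (r κ η : ℝ) : ℝ :=
  ((2 * r - 8) * κ ^ 2 + (1 - r) * κ * η + (1 - r) * η ^ 2) * κ ^ (r - 2) * η

def P3m (r κ η : ℝ) : ℝ :=
  ((4 - r) * κ ^ 2 + (4 - r) * κ * η + 2 * (r - 1) * η ^ 2) * κ ^ (r - 2)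

def P4m (r κ η : ℝ) : ℝ := ((r - 3) * κ + (1 - r) * η) * κ ^ (r - 2)

/-- `κ₋ = 1/4`. -/
def κm : ℝ := 1 / 4

/-- `η₋ = 3/4`. -/
def ηm : ℝ := 3 / 4

def a1m (r : ℝ) : ℝ := (P1m r κm ηm - P1m r ηm κm) / (κm - ηm) ^ 3

def a2m (r : ℝ) : ℝ := (P2m r κm ηm - P2m r ηm κm) / (κm - ηm) ^ 3

def a3m (r : ℝ) : ℝ := (P3m r κm ηm - P3m r ηm κm) / (κm - ηm) ^ 3

def a4m (r : ℝ) : ℝ := (P4m r κm ηm - P4m r ηm κm) / (κm - ηm) ^ 3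

/-- `a₀⁻ = 0`. -/
def a0m : ℝ := 0

set_option maxHeartbeats 2000000 in
/-- The exponent `ρ_r⁻` computed from the Rankin coefficients `a_j⁻` equals
`(3^{r−1} − 1)/2`. -/
theorem rho_minus_eq (r : ℝ) (hr : 0 < r) :
    (2 : ℝ) ^ (2 * r - 8) *
        (2 ^ 8 * a0m + 2 ^ 6 * a1m r + 2 ^ 4 * 2 * a2m r + 2 ^ 2 * 5 * a3m r + 14 * a4m r) - 1 =
      ((3 : ℝ) ^ (r - 1) - 1) / 2 := by
  have hA : (0:ℝ) < (4:ℝ) ^ r := Real.rpow_pos_of_pos (by norm_num) r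
  have hB : (0:ℝ) < (3:ℝ) ^ r := Real.rpow_pos_of_pos (by norm_num) r
  have h1 : (1/4:ℝ) ^ r = ((4:ℝ) ^ r)⁻¹ := by
    rw [one_div, Real.inv_rpow (by norm_num)]
  have h2 : (3/4:ℝ) ^ r = (3:ℝ) ^ r / (4:ℝ) ^ r :=
    Real.div_rpow (by norm_num) (by norm_num) r
  have h3 : (2:ℝ) ^ (2*r - 8) = (4:ℝ) ^ r / 256 := by
    rw [Real.rpow_sub (by norm_num), show (4:ℝ) = 2 ^ (2:ℝ) by norm_num,
      ← Real.rpow_mul (by norm_num)]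
    norm_num
  have h4 : (3:ℝ) ^ (r - 1) = (3:ℝ) ^ r / 3 := by
    rw [Real.rpow_sub (by norm_num), Real.rpow_one]
  have h5 : (1/4:ℝ) ^ (r - 1) = ((4:ℝ) ^ r)⁻¹ * 4 := by
    rw [Real.rpow_sub (by norm_num), Real.rpow_one, h1]; ring
  have h6 : (1/4:ℝ) ^ (r - 2) = ((4:ℝ) ^ r)⁻¹ * 16 := by
    rw [Real.rpow_sub (by norm_num), h1, show ((1:ℝ)/4) ^ (2:ℝ) = 1/16 by norm_num]
    ring
  have h7 : (3/4:ℝ) ^ (r - 1) = (3:ℝ) ^ r / (4:ℝ) ^ r * (4/3) := by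
    rw [Real.rpow_sub (by norm_num), Real.rpow_one, h2]; ring
  have h8 : (3/4:ℝ) ^ (r - 2) = (3:ℝ) ^ r / (4:ℝ) ^ r * (16/9) := by
    rw [Real.rpow_sub (by norm_num), h2, show ((3:ℝ)/4) ^ (2:ℝ) = 9/16 by norm_num]
    ring
  simp only [a0m, a1m, a2m, a3m, a4m, P1m, P2m, P3m, P4m, κm, ηm, h3, h4, h5, h6, h7, h8]
  field_simp
  ring
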